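/- arXiv:1212.6958 — 3 statements merged into one kernel-verified Lean document; each statement's English description precedes it below -/
import Mathlib

section
/- For real τ ≥ 1, real z > 0, and real Δz with Δz/z ≥ (1−τ)/τ and z + Δz > 0, it holds that −ln(z + Δz) ≤ −ln z − Δz/z + (τ/2)(Δz)²/z². -/
/-!
Writing `x = (z + Δz) / z`, the claim is `x - 1 - τ/2 (x - 1)² ≤ log x` whenever `τ x ≥ 1`.
The difference `g x = log x - (x - 1) + τ/2 (x - 1)²` has derivative `(x - 1)(τ x - 1) / x`, so `g`
decreases on `[1/τ, 1]` and increases on `[1, ∞)` (here `τ ≥ 1` is needed), with minimum `g 1 = 0`.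
-/

open Set

namespace Real

lemma hasDerivAt_log_sub_add_mul_sq (τ : ℝ) {x : ℝ} (hx : 0 < x) :
    HasDerivAt (fun y => log y - (y - 1) + τ / 2 * (y - 1) ^ 2)
      ((x - 1) * (τ * x - 1) / x) x := by
  have hsub : HasDerivAt (fun y : ℝ => y - 1) 1 x := (hasDerivAt_id x).sub_const 1
  refine (((hasDerivAt_log hx.ne').fun_sub hsub).fun_add
    ((hsub.fun_pow 2).const_mul (τ / 2))).congr_deriv ?_
  field_simp
  ring

variable {τ : ℝ}

lemma monotoneOn_log_sub_add_mul_sq (hτ : 1 ≤ τ) :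
    MonotoneOn (fun y => log y - (y - 1) + τ / 2 * (y - 1) ^ 2) (Ici 1) := by
  have hderiv {y : ℝ} (hy : 1 ≤ y) := hasDerivAt_log_sub_add_mul_sq τ (one_pos.trans_le hy)
  refine monotoneOn_of_hasDerivWithinAt_nonneg (convex_Ici 1)
    (fun y hy => (hderiv hy).continuousAt.continuousWithinAt)
    (fun y hy => (hderiv (interior_subset hy)).hasDerivWithinAt) fun y hy => ?_
  rw [interior_Ici, mem_Ioi] at hy
  have : 1 ≤ τ * y := by nlinarith
  exact div_nonneg (mul_nonneg (by linarith) (by linarith)) (by linarith)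

lemma antitoneOn_log_sub_add_mul_sq (hτ : 0 < τ) :
    AntitoneOn (fun y => log y - (y - 1) + τ / 2 * (y - 1) ^ 2) (Icc τ⁻¹ 1) := by
  have hderiv {y : ℝ} (hy : y ∈ Icc τ⁻¹ 1) :=
    hasDerivAt_log_sub_add_mul_sq τ ((inv_pos.2 hτ).trans_le hy.1)
  refine antitoneOn_of_hasDerivWithinAt_nonpos (convex_Icc τ⁻¹ 1)
    (fun y hy => (hderiv hy).continuousAt.continuousWithinAt)
    (fun y hy => (hderiv (interior_subset hy)).hasDerivWithinAt) fun y hy => ?_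
  rw [interior_Icc] at hy
  have : 1 < τ * y := (inv_lt_iff_one_lt_mul₀' hτ).1 hy.1
  exact div_nonpos_of_nonpos_of_nonneg (mul_nonpos_of_nonpos_of_nonneg (by linarith [hy.2])
    (by linarith)) (by linarith [(inv_pos.2 hτ).trans hy.1])

lemma sub_sub_mul_sq_le_log (hτ : 1 ≤ τ) {x : ℝ} (hτx : 1 ≤ τ * x) :
    x - 1 - τ / 2 * (x - 1) ^ 2 ≤ log x := by
  suffices (fun y => log y - (y - 1) + τ / 2 * (y - 1) ^ 2) 1 ≤
      (fun y => log y - (y - 1) + τ / 2 * (y - 1) ^ 2) x by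
    simp only [log_one, sub_self] at this
    linarith
  rcases le_total 1 x with h1x | hx1
  · exact monotoneOn_log_sub_add_mul_sq hτ self_mem_Ici h1x h1x
  · have hτ0 : 0 < τ := one_pos.trans_le hτ
    have hxmem : x ∈ Icc τ⁻¹ 1 := ⟨(inv_le_iff_one_le_mul₀' hτ0).2 hτx, hx1⟩
    exact antitoneOn_log_sub_add_mul_sq hτ0 hxmem (right_mem_Icc.2 (hxmem.1.trans hx1)) hx1

end Real

theorem stmt_5 (τ z Δz : ℝ) (hτ : 1 ≤ τ) (hz : 0 < z)
    (hratio : (1 - τ) / τ ≤ Δz / z) (hpos : 0 < z + Δz) :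
    -Real.log (z + Δz) ≤ -Real.log z - Δz / z + τ / 2 * Δz ^ 2 / z ^ 2 := by
  have hτ0 : 0 < τ := one_pos.trans_le hτ
  have hsub : (z + Δz) / z - 1 = Δz / z := by field_simp; ring
  have hτx : 1 ≤ τ * ((z + Δz) / z) := by
    rw [div_le_div_iff₀ hτ0 hz] at hratio
    rw [mul_div_assoc', le_div_iff₀ hz]
    linarith
  have key := Real.sub_sub_mul_sq_le_log hτ hτx
  rw [hsub, Real.log_div hpos.ne' hz.ne', div_pow, ← mul_div_assoc] at key
  linarith
end

section
/- Let s ∈ R^n with s > 0 componentwise, let S = diag(s), let s₀ = minᵢ sᵢ, let μ = (sᵀs)/n, and define g ∈ R^n by gᵢ = βμ − sᵢ² (i.e. g = βμ𝟏 − s∘s, where ∘ denotes the elementwise product), where β = n/(n+√n). Then ‖S⁻¹g‖ ≥ (√3/2)·μ·β/s₀. -/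
open BigOperators

set_option maxHeartbeats 1000000 in
theorem stmt_8 (n : ℕ) (hn : 1 ≤ n) (s : Fin n → ℝ) (hs : ∀ i, 0 < s i)
    (s0 : ℝ) (hs0le : ∀ i, s0 ≤ s i) (hs0mem : ∃ i, s i = s0)
    (β μ : ℝ) (hβ : β = n / (n + Real.sqrt n)) (hμ : μ = (∑ i, (s i) ^ 2) / n) :
    Real.sqrt 3 / 2 * μ * β / s0 ≤
      Real.sqrt (∑ i, ((β * μ - (s i) ^ 2) / s i) ^ 2) := by
  obtain ⟨i₀, hi₀⟩ := hs0mem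
  have hs0pos : 0 < s0 := hi₀ ▸ hs i₀
  have hnR : (0:ℝ) < (n:ℝ) := by exact_mod_cast hn
  set r : ℝ := Real.sqrt n with hr
  have hrpos : 0 < r := Real.sqrt_pos.mpr hnR
  have hr2 : r ^ 2 = n := Real.sq_sqrt hnR.le
  have hsumpos : 0 < ∑ i, (s i) ^ 2 :=
    Finset.sum_pos (fun i _ => pow_pos (hs i) 2) ⟨i₀, Finset.mem_univ i₀⟩
  have hμpos : 0 < μ := by rw [hμ]; positivity
  have hsum : ∑ i, (s i) ^ 2 = n * μ := by
    rw [hμ]; field_simp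
  have hβpos : 0 < β := by rw [hβ]; positivity
  have hβn : β * ((n:ℝ) + r) = n := by
    rw [hβ]; field_simp
  -- reduce to squared inequality
  have hLHSnn : 0 < Real.sqrt 3 / 2 * μ * β / s0 := by positivity
  rw [Real.le_sqrt' hLHSnn]
  have h3 : (Real.sqrt 3) ^ 2 = 3 := Real.sq_sqrt (by norm_num)
  have hsqeq : (Real.sqrt 3 / 2 * μ * β / s0) ^ 2 = 3 * (β * μ) ^ 2 / (4 * s0 ^ 2) := by
    rw [div_pow, mul_pow, mul_pow, div_pow, h3]; ring
  rw [hsqeq]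
  -- rewrite the sum
  have hT : ∑ i, ((β * μ - (s i) ^ 2) / s i) ^ 2
      = (β * μ) ^ 2 * (∑ i, (1 / s i) ^ 2) - 2 * β * μ * n + n * μ := by
    have hterm : ∀ i, ((β * μ - (s i) ^ 2) / s i) ^ 2
        = (β * μ) ^ 2 * (1 / s i) ^ 2 - 2 * (β * μ) + (s i) ^ 2 := by
      intro i
      have := (hs i).ne'
      field_simp
      ring
    rw [Finset.sum_congr rfl fun i _ => hterm i]
    rw [Finset.sum_add_distrib, Finset.sum_sub_distrib, ← Finset.mul_sum,
      Finset.sum_const, Finset.card_univ, Fintype.card_fin, hsum]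
    push_cast
    ring
  rw [hT]
  rcases Nat.lt_or_ge n 2 with h2 | h2
  · -- n = 1 case
    have hn1 : n = 1 := by omega
    subst hn1
    have hμ1 : μ = s 0 ^ 2 := by rw [hμ]; simp
    have hr1 : r = 1 := by rw [hr]; norm_num
    have hβ1 : β = 1 / 2 := by rw [hβ, hr1]; norm_num
    have hs00 : s i₀ = s 0 := by rw [Fin.fin_one_eq_zero i₀]
    have hs0 : s0 = s 0 := by rw [← hi₀, hs00]
    have hsp := hs 0
    have hspne := hsp.ne'
    rw [Fin.sum_univ_one, hμ1, hβ1, hs0]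
    push_cast
    have e1 : (1 / 2 * s 0 ^ 2) ^ 2 * (1 / s 0) ^ 2 = s 0 ^ 2 / 4 := by
      field_simp
      ring
    have e2 : 3 * (1 / 2 * s 0 ^ 2) ^ 2 / (4 * s 0 ^ 2) = 3 * s 0 ^ 2 / 16 := by
      field_simp
      ring
    rw [e1, e2]
    nlinarith [pow_pos hsp 2]
  · -- n ≥ 2
    have hnR2 : (2:ℝ) ≤ (n:ℝ) := by exact_mod_cast h2
    set E := (Finset.univ : Finset (Fin n)).erase i₀ with hE
    have hcard : (E.card : ℝ) = (n:ℝ) - 1 := by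
      rw [hE, Finset.card_erase_of_mem (Finset.mem_univ i₀), Finset.card_univ,
        Fintype.card_fin]
      push_cast [Nat.cast_sub hn]
      ring
    have hsplit : ∀ f : Fin n → ℝ, ∑ i, f i = f i₀ + ∑ i ∈ E, f i := by
      intro f
      rw [hE, ← Finset.add_sum_erase _ f (Finset.mem_univ i₀)]
    have hEsum : ∑ i ∈ E, (s i) ^ 2 = n * μ - s0 ^ 2 := by
      have := hsplit (fun i => (s i) ^ 2)
      rw [hsum, hi₀] at this
      linarith
    have hDpos : 0 < (n:ℝ) * μ - s0 ^ 2 := by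
      rw [← hEsum]
      apply Finset.sum_pos (fun i _ => pow_pos (hs i) 2)
      rw [hE, ← Finset.card_pos, Finset.card_erase_of_mem (Finset.mem_univ i₀),
        Finset.card_univ, Fintype.card_fin]
      omega
    have hCS : ((n:ℝ) - 1) ^ 2 ≤ ((n:ℝ) * μ - s0 ^ 2) * ∑ i ∈ E, (1 / s i) ^ 2 := by
      have hcs := Finset.sum_mul_sq_le_sq_mul_sq E s (fun i => 1 / s i)
      have hone : ∀ i ∈ E, s i * (1 / s i) = 1 := fun i _ => by
        field_simp [(hs i).ne']
      rw [Finset.sum_congr rfl hone, Finset.sum_const, nsmul_eq_mul, mul_one,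
        hcard, hEsum] at hcs
      exact hcs
    have hQlb : 1 / s0 ^ 2 + ((n:ℝ) - 1) ^ 2 / ((n:ℝ) * μ - s0 ^ 2)
        ≤ ∑ i, (1 / s i) ^ 2 := by
      rw [hsplit (fun i => (1 / s i) ^ 2)]
      simp only [hi₀]
      gcongr
      · rw [div_pow, one_pow]
      · rw [div_le_iff₀ hDpos]
        linarith [hCS]
    have hkey : 3 * (β * μ) ^ 2 / (4 * s0 ^ 2)
        ≤ (β * μ) ^ 2 * (1 / s0 ^ 2 + ((n:ℝ) - 1) ^ 2 / ((n:ℝ) * μ - s0 ^ 2))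
          - 2 * β * μ * n + n * μ := by
      set w : ℝ := s0 ^ 2 with hw
      have hwpos : 0 < w := by positivity
      have hInner : 0 ≤ (n:ℝ) * μ ^ 2 + (3 - 4 * n) * μ * w + 4 * ((n:ℝ) - 1) * w ^ 2 := by
        nlinarith [sq_nonneg (8 * ((n:ℝ) - 1) * w - (4 * (n:ℝ) - 3) * μ), sq_nonneg μ,
          hnR2, hμpos]
      have hid : ((β * μ) ^ 2 * ((n:ℝ) * μ - w) + 4 * (β * μ) ^ 2 * ((n:ℝ) - 1) ^ 2 * w
          - 4 * (2 * β - 1) * n * μ * w * ((n:ℝ) * μ - w)) * ((n:ℝ) + r) ^ 2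
          = (n:ℝ) ^ 2 * μ * ((n:ℝ) * μ ^ 2 + (3 - 4 * n) * μ * w
            + 4 * ((n:ℝ) - 1) * w ^ 2) := by
        linear_combination
          ((β * ((n:ℝ) + r) + (n:ℝ)) * (μ ^ 2 * ((n:ℝ) * μ - w)
              + 4 * μ ^ 2 * ((n:ℝ) - 1) ^ 2 * w)
            - 8 * (n:ℝ) * μ * w * ((n:ℝ) * μ - w) * ((n:ℝ) + r)) * hβn
          + (4 * (n:ℝ) * μ * w * ((n:ℝ) * μ - w)) * hr2
      have h1 : 0 ≤ (n:ℝ) ^ 2 * μ * ((n:ℝ) * μ ^ 2 + (3 - 4 * n) * μ * w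
          + 4 * ((n:ℝ) - 1) * w ^ 2) := mul_nonneg (by positivity) hInner
      have hpos2 : (0:ℝ) < ((n:ℝ) + r) ^ 2 := by positivity
      have hG : 0 ≤ (β * μ) ^ 2 * ((n:ℝ) * μ - w) + 4 * (β * μ) ^ 2 * ((n:ℝ) - 1) ^ 2 * w
          - 4 * (2 * β - 1) * n * μ * w * ((n:ℝ) * μ - w) := by
        nlinarith [hid, h1, hpos2]
      have heq2 : (β * μ) ^ 2 * (1 / w + ((n:ℝ) - 1) ^ 2 / ((n:ℝ) * μ - w))
          - 2 * β * μ * n + n * μ - 3 * (β * μ) ^ 2 / (4 * w)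
          = ((β * μ) ^ 2 * ((n:ℝ) * μ - w) + 4 * (β * μ) ^ 2 * ((n:ℝ) - 1) ^ 2 * w
            - 4 * (2 * β - 1) * n * μ * w * ((n:ℝ) * μ - w)) / (4 * w * ((n:ℝ) * μ - w)) := by
        rw [eq_div_iff (by positivity)]
        have e1 : 1 / w * w = 1 := one_div_mul_cancel hwpos.ne'
        have e2 : ((n:ℝ) - 1) ^ 2 / ((n:ℝ) * μ - w) * ((n:ℝ) * μ - w) = ((n:ℝ) - 1) ^ 2 :=
          div_mul_cancel₀ _ hDpos.ne'
        have e3 : 3 * (β * μ) ^ 2 / (4 * w) * (4 * w) = 3 * (β * μ) ^ 2 :=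
          div_mul_cancel₀ _ (by positivity)
        linear_combination (β * μ) ^ 2 * 4 * ((n:ℝ) * μ - w) * e1 + (β * μ) ^ 2 * 4 * w * e2
          - ((n:ℝ) * μ - w) * e3
      have hpos3 : (0:ℝ) < 4 * w * ((n:ℝ) * μ - w) := by positivity
      have hdiv := div_nonneg hG hpos3.le
      rw [← heq2] at hdiv
      linarith
    calc 3 * (β * μ) ^ 2 / (4 * s0 ^ 2)
        ≤ (β * μ) ^ 2 * (1 / s0 ^ 2 + ((n:ℝ) - 1) ^ 2 / ((n:ℝ) * μ - s0 ^ 2))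
          - 2 * β * μ * n + n * μ := hkey
      _ ≤ (β * μ) ^ 2 * (∑ i, (1 / s i) ^ 2) - 2 * β * μ * n + n * μ := by
          gcongr
end

section
/- Let Φ ∈ R^{n×k} have full column rank, let ΦU ∈ R^{n×n} be positive semidefinite (vᵀΦUv ≥ 0 for all v), and let D ∈ R^{n×n} be diagonal with all diagonal entries strictly in (0,1). Then the matrix G = Φᵀ[ΦU(D − I) − D]Φ is invertible. -/
open Matrix BigOperators

theorem stmt_12 (n k : ℕ)
    (Φ : Matrix (Fin n) (Fin k) ℝ)
    (hΦ : Function.Injective fun w : Fin k → ℝ => Φ *ᵥ w)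
    (U : Matrix (Fin k) (Fin n) ℝ)
    (hPSD : ∀ v : Fin n → ℝ, 0 ≤ v ⬝ᵥ ((Φ * U) *ᵥ v))
    (d : Fin n → ℝ) (hd : ∀ i, 0 < d i ∧ d i < 1) :
    IsUnit (Φᵀ * (Φ * U * (Matrix.diagonal d - 1) - Matrix.diagonal d) * Φ) := by
  rw [Matrix.isUnit_iff_isUnit_det, isUnit_iff_ne_zero]
  intro hdet
  obtain ⟨w, hw0, hw⟩ := (Matrix.exists_mulVec_eq_zero_iff).mpr hdet
  set D := Matrix.diagonal d with hD
  set v : Fin n → ℝ := Φ *ᵥ w with hv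
  have hvne : v ≠ 0 := by
    intro h
    apply hw0
    apply hΦ
    simp only [hv] at h
    simpa [Matrix.mulVec_zero] using h
  set Dv : Fin n → ℝ := D *ᵥ v with hDv
  set a : Fin n → ℝ := v - Dv with ha
  set p : Fin n → ℝ := (Φ * U) *ᵥ a with hp
  -- From G *ᵥ w = 0, deduce Φᵀ *ᵥ (p + Dv) = 0
  have hker : Φᵀ *ᵥ (p + Dv) = 0 := by
    have h1 : Φᵀ *ᵥ ((Φ * U * (D - 1) - D) *ᵥ v) = 0 := by
      rw [hv, Matrix.mulVec_mulVec, Matrix.mulVec_mulVec]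
      simpa [Matrix.mul_assoc] using hw
    have h2 : (Φ * U * (D - 1) - D) *ᵥ v = -(p + Dv) := by
      simp only [hp, ha, hDv, Matrix.sub_mulVec, Matrix.mulVec_sub,
        Matrix.mulVec_add, Matrix.one_mulVec, ← Matrix.mulVec_mulVec,
        Matrix.mulVec_neg, neg_add, neg_sub]
      abel
    rw [h2, Matrix.mulVec_neg, neg_eq_zero] at h1
    exact h1
  -- Pairing lemma
  have key : ∀ u : Fin k → ℝ, (Φ *ᵥ u) ⬝ᵥ (p + Dv) = 0 := by
    intro u
    have : (Φ *ᵥ u) ⬝ᵥ (p + Dv) = u ⬝ᵥ (Φᵀ *ᵥ (p + Dv)) := by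
      rw [Matrix.mulVec_transpose, dotProduct_comm,
        Matrix.dotProduct_mulVec]
      rw [dotProduct_comm]
    rw [this, hker, dotProduct_zero]
  have e1 : v ⬝ᵥ p + v ⬝ᵥ Dv = 0 := by
    have := key w
    rwa [← hv, dotProduct_add] at this
  have e2 : p ⬝ᵥ p + p ⬝ᵥ Dv = 0 := by
    have := key (U *ᵥ a)
    rwa [Matrix.mulVec_mulVec, ← hp, dotProduct_add] at this
  have e3 : 0 ≤ v ⬝ᵥ p - Dv ⬝ᵥ p := by
    have := hPSD a
    rw [← hp] at this
    rw [ha, sub_dotProduct] at this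
    linarith
  have e4 : 0 ≤ p ⬝ᵥ p + p ⬝ᵥ Dv + Dv ⬝ᵥ p + Dv ⬝ᵥ Dv := by
    have h : (0:ℝ) ≤ (p + Dv) ⬝ᵥ (p + Dv) := by
      apply Finset.sum_nonneg
      intro i _
      exact mul_self_nonneg _
    rw [add_dotProduct, dotProduct_add, dotProduct_add] at h
    linarith
  have ec1 : Dv ⬝ᵥ p = p ⬝ᵥ Dv := dotProduct_comm _ _
  -- Strict inequality: Dv ⬝ᵥ Dv < v ⬝ᵥ Dv
  have e5 : Dv ⬝ᵥ Dv < v ⬝ᵥ Dv := by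
    obtain ⟨i₀, hi₀⟩ : ∃ i, v i ≠ 0 := by
      by_contra h
      push_neg at h
      exact hvne (funext h)
    have hDvi : ∀ i, Dv i = d i * v i := by
      intro i
      rw [hDv, hD, Matrix.mulVec_diagonal]
    rw [dotProduct, dotProduct]
    apply Finset.sum_lt_sum
    · intro i _
      rw [hDvi]
      have h1 := (hd i).1
      have h2 := (hd i).2
      nlinarith [mul_self_nonneg (v i)]
    · refine ⟨i₀, Finset.mem_univ _, ?_⟩
      rw [hDvi]
      have h1 := (hd i₀).1
      have h2 := (hd i₀).2
      have hv2 : 0 < v i₀ * v i₀ := mul_self_pos.mpr hi₀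
      nlinarith [mul_pos (mul_pos h1 hv2) (by linarith : (0:ℝ) < 1 - d i₀)]
  linarith
end
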